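/- A finitely generated subgroup H of PSL_2(Z) contains a parabolic element if and only if some non-trivial power of ab labels a cycle in the Stallings graph Γ(H). -/

import Mathlib

/-- Relators of the presentation `⟨a, b ∣ a² = b³ = 1⟩`. -/
def pslRels : Set (FreeGroup Bool) := {FreeGroup.of true ^ 2, FreeGroup.of false ^ 3}

/-- The modular group `PSL₂(ℤ) = ⟨a, b ∣ a² = b³ = 1⟩ = ℤ/2 * ℤ/3`. -/
abbrev PSL2Z : Type := PresentedGroup pslRels

/-- The order-2 generator `a`. -/
def gen_a : PSL2Z := PresentedGroup.of true

/-- The order-3 generator `b`. -/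
def gen_b : PSL2Z := PresentedGroup.of false

/-- The alphabet `{a, b, b⁻¹}`. -/
inductive Letter : Type
  | A | B | Binv
deriving DecidableEq

/-- Interpretation of a letter in `PSL₂(ℤ)`. -/
def Letter.toG : Letter → PSL2Z
  | .A => gen_a
  | .B => gen_b
  | .Binv => gen_b⁻¹

/-- Evaluation of a word over `{a, b, b⁻¹}` in `PSL₂(ℤ)`. -/
def evalWord (w : List Letter) : PSL2Z := (w.map Letter.toG).prod

/-- Two adjacent letters alternate between `a` and `{b, b⁻¹}`. -/
def AltPair (x y : Letter) : Prop := (x = .A ∧ y ≠ .A) ∨ (x ≠ .A ∧ y = .A)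

/-- A word is in normal form (freely reduced, no factor `a²`, `b²`, `b⁻²`):
it has length ≤ 1 or alternates `a` with letters in `{b, b⁻¹}`. -/
def NormalWord (w : List Letter) : Prop := w.Chain' AltPair

/-- `w` is a geodesic representative of `g`. -/
def Geodesic (w : List Letter) (g : PSL2Z) : Prop :=
  evalWord w = g ∧ ∀ w' : List Letter, evalWord w' = g → w.length ≤ w'.length

/-- A cyclically reduced word: a normal form of length 1, or starting with `a`
and ending in `{b, b⁻¹}`, or starting in `{b, b⁻¹}` and ending with `a`. -/
def CyclicallyReducedWord (w : List Letter) : Prop :=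
  NormalWord w ∧ (w.length = 1 ∨
    ∃ x y, w.head? = some x ∧ w.getLast? = some y ∧
      ((x = .A ∧ y ≠ .A) ∨ (x ≠ .A ∧ y = .A)))

/-- The right-coset equivalence: `x ≈ y` iff `x y⁻¹ ∈ H` (so `Hx = Hy`). -/
def cosetSetoid (H : Subgroup PSL2Z) : Setoid PSL2Z where
  r x y := x * y⁻¹ ∈ H
  iseqv := by
    refine ⟨fun x => by simpa using H.one_mem, fun {x y} h => ?_, fun {x y z} hxy hyz => ?_⟩
    · simpa [mul_inv_rev] using H.inv_mem h
    · simpa [mul_assoc] using H.mul_mem hxy hyz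

/-- The vertex set of the Schreier graph of `H`: right cosets of `H`. -/
def Coset (H : Subgroup PSL2Z) : Type := Quotient (cosetSetoid H)

/-- The base vertex `H·1` of the Schreier graph. -/
def base (H : Subgroup PSL2Z) : Coset H := Quotient.mk (cosetSetoid H) 1

/-- Reading a letter from a vertex of the Schreier graph: `Hg ↦ Hgℓ`. -/
def step {H : Subgroup PSL2Z} (v : Coset H) (ℓ : Letter) : Coset H :=
  Quotient.map (fun g => g * ℓ.toG)
    (fun x y hxy => by
      change x * y⁻¹ ∈ H at hxy
      change x * ℓ.toG * (y * ℓ.toG)⁻¹ ∈ H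
      simpa [mul_inv_rev, mul_assoc] using hxy) v

/-- Reading a word from a vertex of the Schreier graph. -/
def readW {H : Subgroup PSL2Z} (v : Coset H) (w : List Letter) : Coset H :=
  w.foldl step v

/-- Some geodesic (normal-form) cycle at the base vertex reads letter `m`
from the vertex `u`. -/
def edgeOkAux (H : Subgroup PSL2Z) (u : Coset H) (m : Letter) : Prop :=
  ∃ w p q : List Letter, NormalWord w ∧ evalWord w ∈ H ∧
    w = p ++ m :: q ∧ readW (base H) p = u

/-- Traversing letter `ℓ` from `v` uses an edge of the Stallings graph `Γ(H)`
(the subgraph of the Schreier graph spanned by the geodesic cycles at the base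
vertex); `a`-edges and `b`-edges may be traversed in either direction. -/
def edgeOk (H : Subgroup PSL2Z) (v : Coset H) : Letter → Prop
  | .A => edgeOkAux H v .A ∨ edgeOkAux H (step v .A) .A
  | .B => edgeOkAux H v .B ∨ edgeOkAux H (step v .B) .Binv
  | .Binv => edgeOkAux H v .Binv ∨ edgeOkAux H (step v .Binv) .B

/-- `w` labels a path in the Stallings graph `Γ(H)` starting at `v`. -/
def labelsPathFrom (H : Subgroup PSL2Z) : Coset H → List Letter → Prop
  | _, [] => True
  | v, ℓ :: w => edgeOk H v ℓ ∧ labelsPathFrom H (step v ℓ) w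

/-- `w` labels a cycle at `v` in the Stallings graph `Γ(H)`. -/
def labelsCycleAt (H : Subgroup PSL2Z) (v : Coset H) (w : List Letter) : Prop :=
  labelsPathFrom H v w ∧ readW v w = v

/-- `v` is a vertex of the Stallings graph `Γ(H)`. -/
def StallingsVertex (H : Subgroup PSL2Z) (v : Coset H) : Prop :=
  ∃ w p q : List Letter, NormalWord w ∧ evalWord w ∈ H ∧ w = p ++ q ∧
    readW (base H) p = v

/-- `H` is almost malnormal: `H ∩ H^x` is finite for every `x ∉ H`. -/
def AlmostMalnormal (H : Subgroup PSL2Z) : Prop :=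
  ∀ x : PSL2Z, x ∉ H → {g : PSL2Z | g ∈ H ∧ x * g * x⁻¹ ∈ H}.Finite

/-! If `x (ab)^m x⁻¹ ∈ H`, take a normal form `X` of `x` and a large multiple `n` of `m`. Freely
reducing `X (ab)^n X⁻¹` cancels at most `|X|` letters on each side of `(ab)^n`, so its normal form,
a geodesic cycle at the base vertex, crosses the `a`- and `b`-edges leaving `Hx(ab)^t` for every
`t` in a long middle range. As the coset `Hx(ab)^t` only depends on `t` modulo `m`, all edges of
the closed path `(ab)^m` at `Hx` lie in `Γ(H)`. Conversely, a cycle labelled `(ab)^m` at `Hg` says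
that `g (ab)^m g⁻¹ ∈ H`. -/

lemma gen_a_sq : gen_a ^ 2 = 1 :=
  (map_pow (PresentedGroup.mk pslRels) _ 2).symm.trans
    (PresentedGroup.one_of_mem (by simp [pslRels]))

lemma gen_b_pow_three : gen_b ^ 3 = 1 :=
  (map_pow (PresentedGroup.mk pslRels) _ 3).symm.trans
    (PresentedGroup.one_of_mem (by simp [pslRels]))

lemma gen_a_inv : gen_a⁻¹ = gen_a :=
  inv_eq_of_mul_eq_one_right (by rw [← sq, gen_a_sq])

lemma gen_b_inv : gen_b⁻¹ = gen_b * gen_b :=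
  inv_eq_of_mul_eq_one_right (by rw [← pow_three, gen_b_pow_three])

lemma gen_b_inv_mul_gen_b_inv : gen_b⁻¹ * gen_b⁻¹ = gen_b := by
  rw [← mul_inv_rev, ← gen_b_inv, inv_inv]

@[simp] lemma evalWord_nil : evalWord [] = 1 := rfl

@[simp] lemma evalWord_cons (ℓ : Letter) (w : List Letter) :
    evalWord (ℓ :: w) = ℓ.toG * evalWord w := by
  simp [evalWord]

@[simp] lemma evalWord_append (u v : List Letter) :
    evalWord (u ++ v) = evalWord u * evalWord v := by
  simp [evalWord]

instance : DecidableRel AltPair := fun x y => by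
  unfold AltPair; infer_instance

lemma altPair_iff {x y : Letter} : AltPair x y ↔ (x = .A ↔ y ≠ .A) := by
  cases x <;> cases y <;> simp [AltPair]

lemma AltPair.symm {x y : Letter} (h : AltPair x y) : AltPair y x := by
  rw [altPair_iff] at h ⊢; tauto

lemma AltPair.of_ne_A_right {x y y' : Letter} (h : AltPair x y) (hy : y ≠ .A)
    (hy' : y' ≠ .A) : AltPair x y' := by
  rw [altPair_iff] at h ⊢; tauto

def Letter.inv : Letter → Letter
  | .A => .A
  | .B => .Binv
  | .Binv => .B

@[simp] lemma Letter.toG_inv (ℓ : Letter) : ℓ.inv.toG = ℓ.toG⁻¹ := by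
  cases ℓ <;> simp [Letter.inv, Letter.toG, gen_a_inv]

@[simp] lemma Letter.inv_eq_A {ℓ : Letter} : ℓ.inv = .A ↔ ℓ = .A := by
  cases ℓ <;> simp [Letter.inv]

def invWord (w : List Letter) : List Letter := (w.map Letter.inv).reverse

@[simp] lemma length_invWord (w : List Letter) : (invWord w).length = w.length := by
  simp [invWord]

@[simp] lemma evalWord_invWord (w : List Letter) : evalWord (invWord w) = (evalWord w)⁻¹ := by
  induction w with
  | nil => rfl
  | cons ℓ w ih => simp_all [invWord]

lemma NormalWord.invWord {w : List Letter} (h : NormalWord w) : NormalWord (invWord w) := by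
  rw [NormalWord, _root_.invWord, List.Chain', List.isChain_reverse, List.isChain_map]
  refine h.imp fun x y hxy => ?_
  have := hxy.symm
  rw [altPair_iff] at this ⊢
  simpa using this

lemma NormalWord.append_of_altPair {U W : List Letter} {u w : Letter}
    (hU : NormalWord (U ++ [u])) (hW : NormalWord (w :: W)) (h : AltPair u w) :
    NormalWord (U ++ [u] ++ w :: W) := by
  rw [NormalWord, List.Chain', List.isChain_append]
  refine ⟨hU, hW, fun x hx y hy => ?_⟩
  simp only [List.getLast?_concat, Option.mem_def, Option.some.injEq, List.head?_cons] at hx hy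
  exact hx ▸ hy ▸ h

lemma NormalWord.replace_ne_A {U W : List Letter} {u w μ : Letter}
    (hU : NormalWord (U ++ [u])) (hW : NormalWord (w :: W))
    (hu : u ≠ .A) (hw : w ≠ .A) (hμ : μ ≠ .A) : NormalWord (U ++ [μ] ++ W) := by
  rw [NormalWord, List.Chain', List.isChain_append] at hU ⊢
  rw [NormalWord, List.Chain', List.isChain_cons] at hW
  refine ⟨?_, hW.2, ?_⟩
  · rw [List.isChain_append]
    exact ⟨hU.1, List.isChain_singleton μ, fun x hx y hy => by
      simp only [List.head?_cons, Option.mem_def, Option.some.injEq] at hy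
      exact hy ▸ (hU.2.2 x hx u (by simp)).of_ne_A_right hu hμ⟩
  · intro x hx y hy
    simp only [List.getLast?_concat, Option.mem_def, Option.some.injEq] at hx
    exact hx ▸ ((hW.1 y hy).symm.of_ne_A_right hw hμ).symm

/-- The normal form of `U ++ W` arises by cancelling a suffix of `U` against an equally long
prefix of `W`, up to a residue `μ`. -/
def BoundedCancellation (U W : List Letter) : Prop :=
  ∃ U₁ U₂ W₂ W₁ μ : List Letter, U = U₁ ++ U₂ ∧ W = W₂ ++ W₁ ∧
    U₂.length = W₂.length ∧ NormalWord (U₁ ++ μ ++ W₁) ∧ evalWord (U₂ ++ W₂) = evalWord μ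

namespace BoundedCancellation

lemma nil_left {W : List Letter} (hW : NormalWord W) : BoundedCancellation [] W :=
  ⟨[], [], [], W, [], rfl, rfl, rfl, by simpa using hW, rfl⟩

lemma nil_right {U : List Letter} (hU : NormalWord U) : BoundedCancellation U [] :=
  ⟨U, [], [], [], [], by simp, rfl, rfl, by simpa using hU, rfl⟩

lemma of_altPair {U W : List Letter} {u w : Letter} (hU : NormalWord (U ++ [u]))
    (hW : NormalWord (w :: W)) (h : AltPair u w) :
    BoundedCancellation (U ++ [u]) (w :: W) :=
  ⟨U ++ [u], [], [], w :: W, [], by simp, rfl, rfl, by simpa using hU.append_of_altPair hW h, rfl⟩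

lemma cancel {U W : List Letter} {u w : Letter} (h : BoundedCancellation U W)
    (huw : u.toG * w.toG = 1) : BoundedCancellation (U ++ [u]) (w :: W) := by
  obtain ⟨U₁, U₂, W₂, W₁, μ, rfl, rfl, hlen, hN, heval⟩ := h
  refine ⟨U₁, U₂ ++ [u], w :: W₂, W₁, μ, by simp, rfl, by simp [hlen], hN, ?_⟩
  rw [← heval]
  simp only [evalWord_append, evalWord_cons, evalWord_nil, mul_one]
  rw [mul_assoc, ← mul_assoc u.toG, huw, one_mul]

lemma merge {U W : List Letter} {u w μ : Letter} (hU : NormalWord (U ++ [u]))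
    (hW : NormalWord (w :: W)) (hμ : u.toG * w.toG = μ.toG)
    (hu : u ≠ .A) (hw : w ≠ .A) (hμA : μ ≠ .A) :
    BoundedCancellation (U ++ [u]) (w :: W) :=
  ⟨U, [u], [w], W, [μ], rfl, rfl, rfl, hU.replace_ne_A hW hu hw hμA, by simp [hμ]⟩

theorem of_normalWord {U W : List Letter} (hU : NormalWord U) (hW : NormalWord W) :
    BoundedCancellation U W := by
  induction U using List.reverseRecOn generalizing W with
  | nil => exact nil_left hW
  | append_singleton U u ih =>
    cases W with
    | nil => exact nil_right hU
    | cons w W =>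
      have ih' := ih (List.isChain_append.mp hU).1 hW.tail
      cases u <;> cases w
      · exact ih'.cancel (by rw [← sq]; exact gen_a_sq)
      · exact of_altPair hU hW (by decide)
      · exact of_altPair hU hW (by decide)
      · exact of_altPair hU hW (by decide)
      · exact merge (μ := .Binv) hU hW gen_b_inv.symm (by decide) (by decide) (by decide)
      · exact ih'.cancel (mul_inv_cancel gen_b)
      · exact of_altPair hU hW (by decide)
      · exact ih'.cancel (inv_mul_cancel gen_b)
      · exact merge (μ := .B) hU hW gen_b_inv_mul_gen_b_inv (by decide) (by decide) (by decide)

end BoundedCancellation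

lemma exists_normalWord (g : PSL2Z) : ∃ X : List Letter, NormalWord X ∧ evalWord X = g := by
  have hg : g ∈ Subgroup.closure (Set.range (PresentedGroup.of : Bool → PSL2Z)) := by
    rw [PresentedGroup.closure_range_of]; exact Subgroup.mem_top g
  induction hg using Subgroup.closure_induction with
  | mem _ h =>
    obtain ⟨b, rfl⟩ := h
    cases b
    · exact ⟨[.B], List.isChain_singleton _, mul_one gen_b⟩
    · exact ⟨[.A], List.isChain_singleton _, mul_one gen_a⟩
  | one => exact ⟨[], List.isChain_nil, rfl⟩
  | mul _ _ _ _ hx hy =>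
    obtain ⟨X, hX, rfl⟩ := hx
    obtain ⟨Y, hY, rfl⟩ := hy
    obtain ⟨X₁, X₂, Y₂, Y₁, μ, rfl, rfl, -, hN, heval⟩ :=
      BoundedCancellation.of_normalWord hX hY
    refine ⟨X₁ ++ μ ++ Y₁, hN, ?_⟩
    simp only [evalWord_append] at heval ⊢
    rw [← heval]
    group
  | inv _ _ hx =>
    obtain ⟨X, hX, rfl⟩ := hx
    exact ⟨invWord X, hX.invWord, evalWord_invWord X⟩

lemma List.exists_eq_append_of_append_eq_append {α : Type*} {l₁ l₂ l₃ l₄ : List α}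
    (h : l₁ ++ l₂ = l₃ ++ l₄) (hl : l₁.length ≤ l₃.length) :
    ∃ F, l₃ = l₁ ++ F ∧ l₂ = F ++ l₄ := by
  obtain ⟨F, rfl⟩ := List.prefix_of_prefix_length_le (List.prefix_append l₁ l₂)
    (h ▸ List.prefix_append l₃ l₄) hl
  exact ⟨F, rfl, by simpa using h⟩

theorem exists_normalWord_mul_mul {U V W : List Letter} (hU : NormalWord U) (hV : NormalWord V)
    (hW : NormalWord W) (hlen : U.length + W.length ≤ V.length) :
    ∃ P V₁ V₂ V₃ S : List Letter, V = V₁ ++ V₂ ++ V₃ ∧ V₁.length ≤ U.length ∧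
      V₃.length ≤ W.length ∧ NormalWord (P ++ V₂ ++ S) ∧
      evalWord P = evalWord U * evalWord V₁ ∧ evalWord S = evalWord V₃ * evalWord W := by
  obtain ⟨V', V₃, W₂, W₁, μ, rfl, rfl, hlen₃, hN, hμ⟩ :=
    BoundedCancellation.of_normalWord hV hW
  obtain ⟨U₁, U₂, V₁, R, ν, rfl, hR, hlen₁, hN', hν⟩ :=
    BoundedCancellation.of_normalWord hU hN
  simp only [List.length_append] at hlen
  obtain ⟨V₂, rfl, rfl⟩ := List.exists_eq_append_of_append_eq_append
    (l₄ := μ ++ W₁) (by simpa using hR.symm) (by omega)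
  refine ⟨U₁ ++ ν, V₁, V₂, V₃, μ ++ W₁, rfl, by simp; omega, by simp; omega,
    by simpa using hN', ?_, ?_⟩
  · simp only [evalWord_append] at hν ⊢
    rw [← hν, mul_assoc]
  · simp only [evalWord_append] at hμ ⊢
    rw [← hμ, mul_assoc]

def abWord (n : ℕ) : List Letter := List.flatten (List.replicate n [Letter.A, Letter.B])

lemma abWord_succ (n : ℕ) : abWord (n + 1) = .A :: .B :: abWord n := rfl

lemma abWord_add (m n : ℕ) : abWord (m + n) = abWord m ++ abWord n := by
  rw [abWord, abWord, abWord, List.replicate_add, List.flatten_append]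

@[simp] lemma length_abWord (n : ℕ) : (abWord n).length = 2 * n := by
  induction n with
  | zero => rfl
  | succ n ih => rw [abWord_succ, List.length_cons, List.length_cons, ih]; ring

lemma evalWord_abWord (n : ℕ) : evalWord (abWord n) = (gen_a * gen_b) ^ n := by
  induction n with
  | zero => rfl
  | succ n ih => simp [abWord_succ, ih, pow_succ', Letter.toG, mul_assoc]

lemma normalWord_B_cons_abWord (n : ℕ) : NormalWord (.B :: abWord n) := by
  induction n with
  | zero => exact List.isChain_singleton _
  | succ n ih =>
    exact List.isChain_cons_cons.2 ⟨by decide, List.isChain_cons_cons.2 ⟨by decide, ih⟩⟩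

lemma normalWord_abWord : ∀ n : ℕ, NormalWord (abWord n)
  | 0 => List.isChain_nil
  | n + 1 => List.isChain_cons_cons.2 ⟨by decide, normalWord_B_cons_abWord n⟩

lemma exists_abWord_of_infix_abWord {V₁ V₂ V₃ : List Letter} {n t : ℕ}
    (hV : V₁ ++ V₂ ++ V₃ = abWord n) (h₁ : V₁.length ≤ 2 * t)
    (h₂ : 2 * t + 2 + V₃.length ≤ 2 * n) :
    ∃ G G', V₂ = G ++ .A :: .B :: G' ∧ V₁ ++ G = abWord t := by
  have hn : abWord n = abWord t ++ .A :: .B :: abWord (n - t - 1) := by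
    rw [← abWord_succ, ← abWord_add]; congr 1; omega
  rw [hn, List.append_assoc] at hV
  obtain ⟨G, hG, hrest⟩ := List.exists_eq_append_of_append_eq_append hV (by simpa using h₁)
  have hlenV := congrArg List.length hV
  have hlenG := congrArg List.length hG
  simp only [List.length_append, List.length_cons, length_abWord] at hlenV hlenG
  obtain ⟨G', hG', -⟩ := List.exists_eq_append_of_append_eq_append (l₁ := G ++ [.A, .B])
    (by simpa using hrest.symm) (by simp; omega)
  exact ⟨G, G', by simpa using hG', hG.symm⟩

lemma conj_pow_mul_mem {G : Type*} [Group G] {H : Subgroup G} {x y : G} {m : ℕ}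
    (hx : x * y ^ m * x⁻¹ ∈ H) (k : ℕ) : x * y ^ (m * k) * x⁻¹ ∈ H := by
  rw [pow_mul, ← conj_pow]
  exact pow_mem hx k

lemma conj_pow_natAbs_mem {G : Type*} [Group G] {H : Subgroup G} {x y : G} {m : ℤ}
    (hx : x * y ^ m * x⁻¹ ∈ H) : x * y ^ m.natAbs * x⁻¹ ∈ H := by
  obtain ⟨n, rfl | rfl⟩ := Int.eq_nat_or_neg m
  · simpa using hx
  · simpa [mul_assoc] using H.inv_mem hx

def Coset.mk (H : Subgroup PSL2Z) (g : PSL2Z) : Coset H := Quotient.mk (cosetSetoid H) g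

section Schreier

variable {H : Subgroup PSL2Z}

lemma Coset.mk_eq_mk_iff {g g' : PSL2Z} : Coset.mk H g = Coset.mk H g' ↔ g * g'⁻¹ ∈ H :=
  ⟨fun h => Quotient.exact h, fun h => Quotient.sound h⟩

lemma Coset.exists_mk (v : Coset H) : ∃ g, Coset.mk H g = v := Quotient.exists_rep v

lemma step_mk (g : PSL2Z) (ℓ : Letter) : step (Coset.mk H g) ℓ = Coset.mk H (g * ℓ.toG) := rfl

lemma readW_mk (g : PSL2Z) (w : List Letter) :
    readW (Coset.mk H g) w = Coset.mk H (g * evalWord w) := by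
  induction w generalizing g with
  | nil => rw [evalWord_nil, mul_one]; rfl
  | cons ℓ w ih => exact (ih _).trans (by rw [evalWord_cons, mul_assoc])

lemma readW_base (w : List Letter) : readW (base H) w = Coset.mk H (evalWord w) :=
  (readW_mk 1 w).trans (by rw [one_mul])

lemma Coset.mk_mul_pow_add_mul {x y : PSL2Z} {m : ℕ} (hx : x * y ^ m * x⁻¹ ∈ H) (j k : ℕ) :
    Coset.mk H (x * y ^ (j + m * k)) = Coset.mk H (x * y ^ j) := by
  rw [Coset.mk_eq_mk_iff]
  convert conj_pow_mul_mem hx k using 1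
  rw [add_comm, pow_add]
  group

end Schreier

section Stallings

variable {H : Subgroup PSL2Z}

lemma edgeOkAux_of_abWord_infix {P V₁ V₂ V₃ S : List Letter} {g : PSL2Z} {n t : ℕ}
    (hN : NormalWord (P ++ V₂ ++ S)) (hH : evalWord (P ++ V₂ ++ S) ∈ H)
    (hV : V₁ ++ V₂ ++ V₃ = abWord n) (hP : evalWord P = g * evalWord V₁)
    (h₁ : V₁.length ≤ 2 * t) (h₂ : 2 * t + 2 + V₃.length ≤ 2 * n) :
    edgeOkAux H (Coset.mk H (g * (gen_a * gen_b) ^ t)) .A ∧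
      edgeOkAux H (step (Coset.mk H (g * (gen_a * gen_b) ^ t)) .A) .B := by
  obtain ⟨G, G', rfl, hG⟩ := exists_abWord_of_infix_abWord hV h₁ h₂
  have hPG : evalWord (P ++ G) = g * (gen_a * gen_b) ^ t := by
    rw [evalWord_append, hP, mul_assoc, ← evalWord_append, hG, evalWord_abWord]
  refine ⟨⟨_, P ++ G, .B :: (G' ++ S), hN, hH, by simp, by rw [readW_base, hPG]⟩,
    ⟨_, P ++ G ++ [.A], G' ++ S, hN, hH, by simp, ?_⟩⟩
  rw [readW_base, evalWord_append, hPG, step_mk]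
  simp

/-- The witness is the normal form of `X (ab)^(m k) X⁻¹`, `X` a normal form of `x`, with `k` so
large that the cancellation cannot reach the block of `(ab)^(m k)` at position `j + m |X|`. -/
lemma edgeOkAux_of_conj_mem {x : PSL2Z} {m : ℕ} (hm : 1 ≤ m)
    (hx : x * (gen_a * gen_b) ^ m * x⁻¹ ∈ H) (j : ℕ) :
    edgeOkAux H (Coset.mk H (x * (gen_a * gen_b) ^ j)) .A ∧
      edgeOkAux H (step (Coset.mk H (x * (gen_a * gen_b) ^ j)) .A) .B := by
  obtain ⟨X, hX, rfl⟩ := exists_normalWord x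
  obtain ⟨k, hk⟩ : ∃ k, k = j + 2 * X.length + 2 := ⟨_, rfl⟩
  have hmj := Nat.le_mul_of_pos_left j hm
  have hmL := Nat.le_mul_of_pos_left X.length hm
  have hlen : X.length + (invWord X).length ≤ (abWord (m * k)).length := by
    simp only [length_invWord, length_abWord]; nlinarith
  obtain ⟨P, V₁, V₂, V₃, S, hV, h₁, h₃, hN, hP, hS⟩ :=
    exists_normalWord_mul_mul hX (normalWord_abWord _) hX.invWord hlen
  have hH : evalWord (P ++ V₂ ++ S) ∈ H := by
    have heval : evalWord (P ++ V₂ ++ S) =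
        evalWord X * (gen_a * gen_b) ^ (m * k) * (evalWord X)⁻¹ := by
      rw [← evalWord_abWord, ← evalWord_invWord, hV]
      simp only [evalWord_append, hP, hS, mul_assoc]
    exact heval ▸ conj_pow_mul_mem hx k
  rw [← Coset.mk_mul_pow_add_mul hx j X.length]
  rw [length_invWord] at h₃
  exact edgeOkAux_of_abWord_infix hN hH hV.symm hP (by nlinarith) (by nlinarith)

lemma labelsPathFrom_abWord {x : PSL2Z}
    (hE : ∀ j, edgeOkAux H (Coset.mk H (x * (gen_a * gen_b) ^ j)) .A ∧
      edgeOkAux H (step (Coset.mk H (x * (gen_a * gen_b) ^ j)) .A) .B) (k j : ℕ) :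
    labelsPathFrom H (Coset.mk H (x * (gen_a * gen_b) ^ j)) (abWord k) := by
  induction k generalizing j with
  | zero => trivial
  | succ k ih =>
    have hstep : step (step (Coset.mk H (x * (gen_a * gen_b) ^ j)) .A) .B =
        Coset.mk H (x * (gen_a * gen_b) ^ (j + 1)) := by
      rw [step_mk, step_mk, pow_succ]
      simp only [Letter.toG, mul_assoc]
    exact ⟨Or.inl (hE j).1, Or.inl (hE j).2, hstep ▸ ih (j + 1)⟩

theorem labelsCycleAt_abWord {x : PSL2Z} {m : ℕ} (hm : 1 ≤ m)
    (hx : x * (gen_a * gen_b) ^ m * x⁻¹ ∈ H) : labelsCycleAt H (Coset.mk H x) (abWord m) := by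
  refine ⟨by simpa using labelsPathFrom_abWord (edgeOkAux_of_conj_mem hm hx) m 0, ?_⟩
  rw [readW_mk, evalWord_abWord, Coset.mk_eq_mk_iff]
  simpa [mul_assoc] using hx

end Stallings

theorem parabolic_iff_ab_cycle_general (H : Subgroup PSL2Z) :
    (∃ (x : PSL2Z) (m : ℤ), m ≠ 0 ∧ x * (gen_a * gen_b) ^ m * x⁻¹ ∈ H) ↔
      ∃ (v : Coset H) (m : ℕ), 1 ≤ m ∧
        labelsCycleAt H v (List.flatten (List.replicate m [Letter.A, Letter.B])) := by
  constructor
  · rintro ⟨x, m, hm, hx⟩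
    have hm' : 1 ≤ m.natAbs := Int.natAbs_pos.2 hm
    exact ⟨Coset.mk H x, m.natAbs, hm', labelsCycleAt_abWord hm' (conj_pow_natAbs_mem hx)⟩
  · rintro ⟨v, m, hm, -, hcycle⟩
    obtain ⟨g, rfl⟩ := Coset.exists_mk v
    change readW _ (abWord m) = _ at hcycle
    rw [readW_mk, evalWord_abWord, Coset.mk_eq_mk_iff] at hcycle
    exact ⟨g, m, by omega, by simpa [mul_assoc] using hcycle⟩

/-- A finitely generated subgroup `H ≤ PSL₂(ℤ)` contains a parabolic element
(a conjugate of a non-trivial power of `ab`) if and only if some non-trivial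
power of `ab` labels a cycle in the Stallings graph `Γ(H)`. -/
theorem parabolic_iff_ab_cycle (H : Subgroup PSL2Z) (hH : H.FG) :
    (∃ (x : PSL2Z) (m : ℤ), m ≠ 0 ∧ x * (gen_a * gen_b) ^ m * x⁻¹ ∈ H) ↔
      ∃ (v : Coset H) (m : ℕ), 1 ≤ m ∧
        labelsCycleAt H v (List.flatten (List.replicate m [Letter.A, Letter.B])) :=
  parabolic_iff_ab_cycle_general H
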